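/- (Proposition 2 of the paper.) Let n ≥ 1 and let 𝓣ₙ denote the cone of positive semidefinite symmetric real n×n Toeplitz matrices (matrices whose (i,j) entry depends only on i − j). For M₁, M₂ ∈ 𝓣ₙ set τ_T(M₁, M₂) := min{(1/n)trace(M) : M ∈ 𝓣ₙ, M ≥ M₁, M ≥ M₂} and δ_T(M₁, M₂) := 2τ_T(M₁, M₂) − (1/n)(trace(M₁) + trace(M₂)). Then δ_T is a metric on 𝓣ₙ. -/

import Mathlib

open Matrix

/-- A matrix is Toeplitz if its `(i,j)` entry depends only on `i - j`. -/
def IsToeplitz {n : ℕ} {α : Type*} (M : Matrix (Fin n) (Fin n) α) : Prop :=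
  ∀ i j i' j' : Fin n, (i : ℤ) - (j : ℤ) = (i' : ℤ) - (j' : ℤ) → M i j = M i' j'

/-- `τ_T(M₁, M₂)`: the minimal normalized trace over the cone `𝓣ₙ` of positive
semidefinite Toeplitz matrices dominating both `M₁` and `M₂` in the Loewner order. -/
noncomputable def tauT (n : ℕ) (M₁ M₂ : Matrix (Fin n) (Fin n) ℝ) : ℝ :=
  sInf {x : ℝ | ∃ M : Matrix (Fin n) (Fin n) ℝ,
    M.PosSemidef ∧ IsToeplitz M ∧ (M - M₁).PosSemidef ∧ (M - M₂).PosSemidef ∧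
    x = (n : ℝ)⁻¹ * M.trace}

/-- `δ_T(M₁, M₂) := 2τ_T(M₁, M₂) - (1/n)(trace M₁ + trace M₂)`. -/
noncomputable def deltaT (n : ℕ) (M₁ M₂ : Matrix (Fin n) (Fin n) ℝ) : ℝ :=
  2 * tauT n M₁ M₂ - (n : ℝ)⁻¹ * (M₁.trace + M₂.trace)

section Aux

open Matrix

variable {n : ℕ}

lemma psd_symm_apply {A : Matrix (Fin n) (Fin n) ℝ} (hA : A.PosSemidef) (i j : Fin n) :
    A j i = A i j := by
  have := congrFun (congrFun hA.1 i) j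
  simpa [conjTranspose_apply] using this

lemma psd_diag_nonneg {A : Matrix (Fin n) (Fin n) ℝ} (hA : A.PosSemidef) (i : Fin n) :
    0 ≤ A i i := by
  have h := hA.dotProduct_mulVec_nonneg (Pi.single i 1)
  simpa [mulVec_single, single_dotProduct] using h

lemma psd_trace_nonneg {A : Matrix (Fin n) (Fin n) ℝ} (hA : A.PosSemidef) :
    0 ≤ A.trace := by
  exact Finset.sum_nonneg fun i _ => psd_diag_nonneg hA i

lemma psd_diag_le_trace {A : Matrix (Fin n) (Fin n) ℝ} (hA : A.PosSemidef) (i : Fin n) :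
    A i i ≤ A.trace := by
  exact Finset.single_le_sum (fun k _ => psd_diag_nonneg hA k) (Finset.mem_univ i)

lemma psd_abs_apply_le_trace {A : Matrix (Fin n) (Fin n) ℝ} (hA : A.PosSemidef) (i j : Fin n) :
    |A i j| ≤ A.trace := by
  rcases eq_or_ne i j with rfl | hij
  · rw [abs_of_nonneg (psd_diag_nonneg hA i)]; exact psd_diag_le_trace hA i
  · have hsym := psd_symm_apply hA i j
    have h1 := hA.dotProduct_mulVec_nonneg (Pi.single i 1 + Pi.single j 1)
    have h2 := hA.dotProduct_mulVec_nonneg (Pi.single i 1 - Pi.single j 1)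
    simp only [star_trivial, mulVec_add, dotProduct_add, add_dotProduct,
      mulVec_sub, dotProduct_sub, sub_dotProduct,
      mulVec_single, single_dotProduct, one_mul, mul_one,
      MulOpposite.op_one, one_smul, col_apply] at h1 h2
    have hi := psd_diag_le_trace hA i
    have hj := psd_diag_le_trace hA j
    have htr := psd_trace_nonneg hA
    have hii := psd_diag_nonneg hA i
    have hjj := psd_diag_nonneg hA j
    rw [abs_le]
    constructor <;> nlinarith [hi, hj, hii, hjj]

/-- The feasible set for `tauT`. -/
def tauSet (n : ℕ) (M₁ M₂ : Matrix (Fin n) (Fin n) ℝ) : Set ℝ :=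
  {x : ℝ | ∃ M : Matrix (Fin n) (Fin n) ℝ,
    M.PosSemidef ∧ IsToeplitz M ∧ (M - M₁).PosSemidef ∧ (M - M₂).PosSemidef ∧
    x = (n : ℝ)⁻¹ * M.trace}

lemma tauT_eq (M₁ M₂ : Matrix (Fin n) (Fin n) ℝ) : tauT n M₁ M₂ = sInf (tauSet n M₁ M₂) := rfl

lemma isToeplitz_add {A B : Matrix (Fin n) (Fin n) ℝ} (hA : IsToeplitz A) (hB : IsToeplitz B) :
    IsToeplitz (A + B) := fun i j i' j' h => by
  simp only [Matrix.add_apply, hA i j i' j' h, hB i j i' j' h]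

lemma isToeplitz_sub {A B : Matrix (Fin n) (Fin n) ℝ} (hA : IsToeplitz A) (hB : IsToeplitz B) :
    IsToeplitz (A - B) := fun i j i' j' h => by
  simp only [Matrix.sub_apply, hA i j i' j' h, hB i j i' j' h]

lemma tauSet_nonempty {M₁ M₂ : Matrix (Fin n) (Fin n) ℝ}
    (h₁ : M₁.PosSemidef) (t₁ : IsToeplitz M₁) (h₂ : M₂.PosSemidef) (t₂ : IsToeplitz M₂) :
    (tauSet n M₁ M₂).Nonempty := by
  refine ⟨(n : ℝ)⁻¹ * (M₁ + M₂).trace, M₁ + M₂, h₁.add h₂, isToeplitz_add t₁ t₂, ?_, ?_, rfl⟩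
  · simpa using h₂
  · have : M₁ + M₂ - M₂ = M₁ := by abel
    rw [this]; exact h₁

lemma tauSet_lb_left {M₁ M₂ : Matrix (Fin n) (Fin n) ℝ} {x : ℝ} (hx : x ∈ tauSet n M₁ M₂) :
    (n : ℝ)⁻¹ * M₁.trace ≤ x := by
  obtain ⟨M, _, _, hd₁, _, rfl⟩ := hx
  have h := psd_trace_nonneg hd₁
  rw [trace_sub] at h
  have hn : (0:ℝ) ≤ (n : ℝ)⁻¹ := by positivity
  nlinarith

lemma tauSet_lb_right {M₁ M₂ : Matrix (Fin n) (Fin n) ℝ} {x : ℝ} (hx : x ∈ tauSet n M₁ M₂) :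
    (n : ℝ)⁻¹ * M₂.trace ≤ x := by
  obtain ⟨M, _, _, _, hd₂, rfl⟩ := hx
  have h := psd_trace_nonneg hd₂
  rw [trace_sub] at h
  have hn : (0:ℝ) ≤ (n : ℝ)⁻¹ := by positivity
  nlinarith

lemma tauSet_bddBelow (M₁ M₂ : Matrix (Fin n) (Fin n) ℝ) :
    BddBelow (tauSet n M₁ M₂) :=
  ⟨(n : ℝ)⁻¹ * M₁.trace, fun _ hx => tauSet_lb_left hx⟩

lemma tauSet_symm (M₁ M₂ : Matrix (Fin n) (Fin n) ℝ) :
    tauSet n M₁ M₂ = tauSet n M₂ M₁ := by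
  ext x
  constructor <;> rintro ⟨M, h1, h2, h3, h4, h5⟩ <;> exact ⟨M, h1, h2, h4, h3, h5⟩

lemma tauT_ge_left {M₁ M₂ : Matrix (Fin n) (Fin n) ℝ}
    (h₁ : M₁.PosSemidef) (t₁ : IsToeplitz M₁) (h₂ : M₂.PosSemidef) (t₂ : IsToeplitz M₂) :
    (n : ℝ)⁻¹ * M₁.trace ≤ tauT n M₁ M₂ :=
  le_csInf (tauSet_nonempty h₁ t₁ h₂ t₂) fun _ hx => tauSet_lb_left hx

lemma tauT_ge_right {M₁ M₂ : Matrix (Fin n) (Fin n) ℝ}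
    (h₁ : M₁.PosSemidef) (t₁ : IsToeplitz M₁) (h₂ : M₂.PosSemidef) (t₂ : IsToeplitz M₂) :
    (n : ℝ)⁻¹ * M₂.trace ≤ tauT n M₁ M₂ :=
  le_csInf (tauSet_nonempty h₁ t₁ h₂ t₂) fun _ hx => tauSet_lb_right hx

lemma deltaT_nonneg' {M₁ M₂ : Matrix (Fin n) (Fin n) ℝ}
    (h₁ : M₁.PosSemidef) (t₁ : IsToeplitz M₁) (h₂ : M₂.PosSemidef) (t₂ : IsToeplitz M₂) :
    0 ≤ deltaT n M₁ M₂ := by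
  have a := tauT_ge_left h₁ t₁ h₂ t₂
  have b := tauT_ge_right h₁ t₁ h₂ t₂
  unfold deltaT
  nlinarith [a, b]

lemma deltaT_symm' (M₁ M₂ : Matrix (Fin n) (Fin n) ℝ) :
    deltaT n M₁ M₂ = deltaT n M₂ M₁ := by
  unfold deltaT tauT
  rw [show {x : ℝ | ∃ M : Matrix (Fin n) (Fin n) ℝ,
    M.PosSemidef ∧ IsToeplitz M ∧ (M - M₁).PosSemidef ∧ (M - M₂).PosSemidef ∧
    x = (n : ℝ)⁻¹ * M.trace} = tauSet n M₁ M₂ from rfl,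
    show {x : ℝ | ∃ M : Matrix (Fin n) (Fin n) ℝ,
    M.PosSemidef ∧ IsToeplitz M ∧ (M - M₂).PosSemidef ∧ (M - M₁).PosSemidef ∧
    x = (n : ℝ)⁻¹ * M.trace} = tauSet n M₂ M₁ from rfl,
    tauSet_symm]
  ring

lemma tauT_self {M : Matrix (Fin n) (Fin n) ℝ}
    (h : M.PosSemidef) (t : IsToeplitz M) :
    tauT n M M = (n : ℝ)⁻¹ * M.trace := by
  refine le_antisymm ?_ (tauT_ge_left h t h t)
  apply csInf_le (tauSet_bddBelow M M)
  exact ⟨M, h, t, by simpa using Matrix.PosSemidef.zero, by simpa using Matrix.PosSemidef.zero, rfl⟩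

lemma deltaT_eq_zero_iff {M₁ M₂ : Matrix (Fin n) (Fin n) ℝ} (hn : 1 ≤ n)
    (h₁ : M₁.PosSemidef) (t₁ : IsToeplitz M₁) (h₂ : M₂.PosSemidef) (t₂ : IsToeplitz M₂) :
    deltaT n M₁ M₂ = 0 ↔ M₁ = M₂ := by
  have hn0 : (0:ℝ) < (n : ℝ) := by exact_mod_cast hn
  constructor
  · intro hδ
    have hτ : 2 * tauT n M₁ M₂ = (n : ℝ)⁻¹ * (M₁.trace + M₂.trace) := by
      unfold deltaT at hδ; linarith
    ext i j
    by_contra hne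
    set d : ℝ := |M₁ i j - M₂ i j| with hd
    have hdpos : 0 < d := abs_pos.mpr (sub_ne_zero.mpr hne)
    set ε : ℝ := d / (8 * n) with hε
    have hεpos : 0 < ε := by positivity
    have hlt : tauT n M₁ M₂ < tauT n M₁ M₂ + ε := by linarith
    obtain ⟨x, hx, hxlt⟩ := exists_lt_of_csInf_lt (tauSet_nonempty h₁ t₁ h₂ t₂) hlt
    obtain ⟨M, hM, tM, hd₁, hd₂, rfl⟩ := hx
    -- trace bounds
    have htr1 : (M - M₁).trace + (M - M₂).trace = 2 * M.trace - (M₁.trace + M₂.trace) := by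
      rw [trace_sub, trace_sub]; ring
    have key : (M - M₁).trace + (M - M₂).trace < 2 * n * ε := by
      rw [htr1]
      have : M.trace < n * (tauT n M₁ M₂ + ε) := by
        have := hxlt
        rw [show (n : ℝ)⁻¹ * M.trace < tauT n M₁ M₂ + ε ↔
            M.trace < n * (tauT n M₁ M₂ + ε) from by
          rw [inv_mul_lt_iff₀ hn0]] at this
        exact this
      have h2τ : (n:ℝ) * (2 * tauT n M₁ M₂) = M₁.trace + M₂.trace := by
        rw [hτ]; field_simp
      nlinarith
    have hb1 : |(M - M₁) i j| ≤ (M - M₁).trace := psd_abs_apply_le_trace hd₁ i j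
    have hb2 : |(M - M₂) i j| ≤ (M - M₂).trace := psd_abs_apply_le_trace hd₂ i j
    have htn1 : 0 ≤ (M - M₁).trace := psd_trace_nonneg hd₁
    have htn2 : 0 ≤ (M - M₂).trace := psd_trace_nonneg hd₂
    have hdiff : M₁ i j - M₂ i j = (M - M₂) i j - (M - M₁) i j := by
      simp [Matrix.sub_apply]
    have : d ≤ |(M - M₂) i j| + |(M - M₁) i j| := by
      rw [hd, hdiff]; exact abs_sub _ _
    have hdle : d < 2 * n * ε := by
      calc d ≤ |(M - M₂) i j| + |(M - M₁) i j| := this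
        _ ≤ (M - M₂).trace + (M - M₁).trace := add_le_add hb2 hb1
        _ < 2 * n * ε := by linarith
    rw [hε] at hdle
    have : (2:ℝ) * n * (d / (8 * n)) = d / 4 := by field_simp; ring
    rw [this] at hdle
    linarith
  · rintro rfl
    unfold deltaT
    rw [tauT_self h₁ t₁]
    ring

lemma tauT_triangle {M₁ M₂ M₃ : Matrix (Fin n) (Fin n) ℝ}
    (h₁ : M₁.PosSemidef) (t₁ : IsToeplitz M₁) (h₂ : M₂.PosSemidef) (t₂ : IsToeplitz M₂)
    (h₃ : M₃.PosSemidef) (t₃ : IsToeplitz M₃) :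
    tauT n M₁ M₃ ≤ tauT n M₁ M₂ + tauT n M₂ M₃ - (n : ℝ)⁻¹ * M₂.trace := by
  refine le_of_forall_pos_le_add fun ε hε => ?_
  have hε2 : 0 < ε / 2 := by positivity
  obtain ⟨x, hx, hxlt⟩ := exists_lt_of_csInf_lt (tauSet_nonempty h₁ t₁ h₂ t₂)
    (lt_add_of_pos_right _ hε2)
  obtain ⟨y, hy, hylt⟩ := exists_lt_of_csInf_lt (tauSet_nonempty h₂ t₂ h₃ t₃)
    (lt_add_of_pos_right _ hε2)
  obtain ⟨M, hM, tM, hM1, hM2, rfl⟩ := hx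
  rw [← tauT_eq] at hxlt hylt
  obtain ⟨N, hN, tN, hN2, hN3, rfl⟩ := hy
  set P : Matrix (Fin n) (Fin n) ℝ := M + N - M₂ with hP
  have hP1 : (P - M₁).PosSemidef := by
    have : P - M₁ = (M - M₁) + (N - M₂) := by rw [hP]; abel
    rw [this]; exact hM1.add hN2
  have hP3 : (P - M₃).PosSemidef := by
    have : P - M₃ = (M - M₂) + (N - M₃) := by rw [hP]; abel
    rw [this]; exact hM2.add hN3
  have hPpsd : P.PosSemidef := by
    have : P = M₁ + (P - M₁) := by abel
    rw [this]; exact h₁.add hP1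
  have hPt : IsToeplitz P := isToeplitz_sub (isToeplitz_add tM tN) t₂
  have hmem : (n : ℝ)⁻¹ * P.trace ∈ tauSet n M₁ M₃ := ⟨P, hPpsd, hPt, hP1, hP3, rfl⟩
  have hle : tauT n M₁ M₃ ≤ (n : ℝ)⁻¹ * P.trace := csInf_le (tauSet_bddBelow _ _) hmem
  have htrP : P.trace = M.trace + N.trace - M₂.trace := by
    rw [hP, trace_sub, trace_add]
  calc tauT n M₁ M₃ ≤ (n : ℝ)⁻¹ * P.trace := hle
    _ = (n : ℝ)⁻¹ * M.trace + (n : ℝ)⁻¹ * N.trace - (n : ℝ)⁻¹ * M₂.trace := by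
        rw [htrP]; ring
    _ ≤ tauT n M₁ M₂ + tauT n M₂ M₃ - (n : ℝ)⁻¹ * M₂.trace + ε := by linarith

end Aux


/-- Proposition 2: `δ_T` is a metric on the cone `𝓣ₙ` of positive semidefinite
symmetric real Toeplitz matrices. -/
theorem deltaT_is_metric (n : ℕ) (hn : 1 ≤ n) :
    (∀ M₁ M₂ : Matrix (Fin n) (Fin n) ℝ,
      M₁.PosSemidef → IsToeplitz M₁ → M₂.PosSemidef → IsToeplitz M₂ →
      0 ≤ deltaT n M₁ M₂) ∧
    (∀ M₁ M₂ : Matrix (Fin n) (Fin n) ℝ,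
      M₁.PosSemidef → IsToeplitz M₁ → M₂.PosSemidef → IsToeplitz M₂ →
      deltaT n M₁ M₂ = deltaT n M₂ M₁) ∧
    (∀ M₁ M₂ : Matrix (Fin n) (Fin n) ℝ,
      M₁.PosSemidef → IsToeplitz M₁ → M₂.PosSemidef → IsToeplitz M₂ →
      (deltaT n M₁ M₂ = 0 ↔ M₁ = M₂)) ∧
    (∀ M₁ M₂ M₃ : Matrix (Fin n) (Fin n) ℝ,
      M₁.PosSemidef → IsToeplitz M₁ → M₂.PosSemidef → IsToeplitz M₂ →
      M₃.PosSemidef → IsToeplitz M₃ →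
      deltaT n M₁ M₃ ≤ deltaT n M₁ M₂ + deltaT n M₂ M₃) := by
  refine ⟨fun M₁ M₂ h₁ t₁ h₂ t₂ => deltaT_nonneg' h₁ t₁ h₂ t₂,
    fun M₁ M₂ _ _ _ _ => deltaT_symm' M₁ M₂,
    fun M₁ M₂ h₁ t₁ h₂ t₂ => deltaT_eq_zero_iff hn h₁ t₁ h₂ t₂,
    fun M₁ M₂ M₃ h₁ t₁ h₂ t₂ h₃ t₃ => ?_⟩
  have := tauT_triangle h₁ t₁ h₂ t₂ h₃ t₃
  unfold deltaT
  linarith
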